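/- arXiv:2304.00811 — 2 statements merged into one kernel-verified Lean document; each statement's English description precedes it below -/
import Mathlib

section
/- Let $(\omega_j)_{j\in\mathbb{N}}$ be a sequence of nonnegative real numbers with $\sum_{j} \omega_j = \infty$. Then there exists a strictly increasing sequence $(j_n)_{n\in\mathbb{N}}$ of natural numbers such that $j_{n+1} - j_n \to \infty$ and $\sum_{n} \omega_{j_n} = \infty$. -/
/-!
For every gap `L` some residue class mod `L` carries a divergent part of `∑ ω`, so arbitrarily far
out there are finite sets with pairwise gaps `≥ L` and weight `≥ 1`. Concatenating such blocks,
the `n`-th one with gaps `≥ n + 1` and placed more than `n + 1` beyond the previous one, gives a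
set of indices with divergent weight whose gaps tend to infinity; `j` enumerates it.
-/

open Filter Finset

def GapsAtLeast (L : ℕ) (s : Set ℕ) : Prop :=
  ∀ x ∈ s, ∀ y ∈ s, x < y → x + L ≤ y

def HasGrowingGaps (S : Set ℕ) : Prop :=
  ∀ L, ∀ᶠ a in atTop, GapsAtLeast L (S ∩ Set.Ici a)

theorem GapsAtLeast.mono {L : ℕ} {s t : Set ℕ} (ht : GapsAtLeast L t) (hst : s ⊆ t) :
    GapsAtLeast L s :=
  fun x hx y hy hxy => ht x (hst hx) y (hst hy) hxy

theorem gapsAtLeast_setOf_mod_eq (L r : ℕ) : GapsAtLeast L {x | x % L = r} := by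
  intro x hx y hy hxy
  have hdvd : L ∣ y - x :=
    Nat.dvd_of_mod_eq_zero (Nat.sub_mod_eq_zero_of_mod_eq (hy.trans hx.symm))
  have := Nat.le_of_dvd (Nat.sub_pos_of_lt hxy) hdvd
  omega

section Divergence

variable {ω : ℕ → ℝ}

theorem exists_lt_sum_Ico (hpos : ∀ j, 0 ≤ ω j) (hdiv : ¬ Summable ω) (a : ℕ) (c : ℝ) :
    ∃ b, c < ∑ i ∈ Ico a b, ω i := by
  have hpartial := (not_summable_iff_tendsto_nat_atTop_of_nonneg hpos).mp hdiv
  obtain ⟨b, hb, hab⟩ :=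
    ((hpartial.eventually_gt_atTop (c + ∑ i ∈ range a, ω i)).and (eventually_ge_atTop a)).exists
  exact ⟨b, by rw [sum_Ico_eq_sub _ hab]; linarith⟩

theorem exists_finset_gapsAtLeast_lt_sum (hpos : ∀ j, 0 ≤ ω j) (hdiv : ¬ Summable ω) (a : ℕ)
    {L : ℕ} (hL : 0 < L) (c : ℝ) :
    ∃ s : Finset ℕ, (∀ x ∈ s, a ≤ x) ∧ GapsAtLeast L s ∧ c < ∑ x ∈ s, ω x := by
  obtain ⟨b, hb⟩ := exists_lt_sum_Ico hpos hdiv a (L • c)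
  obtain ⟨r, -, hr⟩ := exists_lt_sum_fiber_of_maps_to_of_nsmul_lt_sum (t := range L)
    (f := (· % L)) (fun x _ => mem_range.mpr (Nat.mod_lt x hL)) (by rwa [card_range])
  refine ⟨(Ico a b).filter (· % L = r), fun x hx => (mem_Ico.mp (mem_filter.mp hx).1).1,
    (gapsAtLeast_setOf_mod_eq L r).mono fun x hx => (mem_filter.mp hx).2, hr⟩

theorem not_summable_of_forall_exists_one_le_sum
    (h : ∀ a, ∃ s : Finset ℕ, (∀ x ∈ s, a ≤ x) ∧ 1 ≤ ∑ x ∈ s, ω x) : ¬ Summable ω := by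
  intro hsum
  obtain ⟨t, ht⟩ := hsum.vanishing (Iio_mem_nhds one_pos)
  obtain ⟨s, hs_ge, hs_sum⟩ := h (t.sup id + 1)
  have hdisj : Disjoint s t := disjoint_left.mpr fun x hxs hxt => by
    have : x ≤ t.sup id := le_sup (f := id) hxt
    have := hs_ge x hxs
    omega
  exact (ht s hdisj).not_ge hs_sum

end Divergence

namespace Blocks

variable (F : ℕ → ℕ → Finset ℕ)

/-- `F a n` is the `n`-th block when it is to start at `a`. -/
def start : ℕ → ℕ
  | 0 => 0
  | n + 1 => start n + (F (start n) n).sup id + (n + 1)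

def block (n : ℕ) : Finset ℕ := F (start F n) n

theorem strictMono_start : StrictMono (start F) :=
  strictMono_nat_of_lt_succ fun n => by simp only [start]; omega

theorem add_le_start_succ {n x : ℕ} (hx : x ∈ block F n) : x + (n + 1) ≤ start F (n + 1) := by
  have : x ≤ (F (start F n) n).sup id := le_sup (f := id) hx
  simp only [start]
  omega

variable {F}

theorem start_le_of_mem_block (hF : ∀ a n, ∀ x ∈ F a n, a ≤ x) {n x : ℕ}
    (hx : x ∈ block F n) : start F n ≤ x :=
  hF _ _ x hx

theorem add_le_of_mem_block_of_lt (hF : ∀ a n, ∀ x ∈ F a n, a ≤ x) {m n x y : ℕ}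
    (hx : x ∈ block F m) (hy : y ∈ block F n) (hmn : m < n) : x + (m + 1) ≤ y :=
  calc x + (m + 1) ≤ start F (m + 1) := add_le_start_succ F hx
    _ ≤ start F n := (strictMono_start F).monotone hmn
    _ ≤ y := start_le_of_mem_block hF hy

theorem hasGrowingGaps_iUnion_block (hF : ∀ a n, ∀ x ∈ F a n, a ≤ x)
    (hgaps : ∀ a n, GapsAtLeast (n + 1) (F a n)) :
    HasGrowingGaps (⋃ n, (block F n : Set ℕ)) := by
  intro L
  filter_upwards [eventually_ge_atTop (start F L)] with a ha
  rintro x ⟨hx, hax : a ≤ x⟩ y ⟨hy, -⟩ hxy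
  obtain ⟨m, hxm⟩ := Set.mem_iUnion.mp hx
  obtain ⟨n, hyn⟩ := Set.mem_iUnion.mp hy
  have hLm : L ≤ m := by
    by_contra! hmL
    have := add_le_start_succ F hxm
    have := (strictMono_start F).monotone (show m + 1 ≤ L by omega)
    omega
  rcases lt_trichotomy m n with hmn | rfl | hnm
  · have := add_le_of_mem_block_of_lt hF hxm hyn hmn
    omega
  · have := hgaps _ m x hxm y hyn hxy
    omega
  · have := add_le_of_mem_block_of_lt hF hyn hxm hnm
    omega

theorem not_summable_indicator_iUnion_block (hF : ∀ a n, ∀ x ∈ F a n, a ≤ x) {ω : ℕ → ℝ}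
    (hsum : ∀ a n, 1 ≤ ∑ x ∈ F a n, ω x) :
    ¬ Summable ((⋃ n, (block F n : Set ℕ)).indicator ω) := by
  refine not_summable_of_forall_exists_one_le_sum fun a => ⟨block F a, fun x hx => ?_, ?_⟩
  · exact ((strictMono_start F).le_apply).trans (start_le_of_mem_block hF hx)
  · rw [sum_congr rfl fun x hx => Set.indicator_of_mem (Set.mem_iUnion_of_mem a hx) ω]
    exact hsum _ a

end Blocks

section Enumeration

variable {S : Set ℕ}

theorem HasGrowingGaps.tendsto_nth_succ_sub_nth (hS : S.Infinite) (hgaps : HasGrowingGaps S) :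
    Tendsto (fun n => Nat.nth (· ∈ S) (n + 1) - Nat.nth (· ∈ S) n) atTop atTop := by
  have hmono := Nat.nth_strictMono hS
  have hmem := Nat.nth_mem_of_infinite hS
  refine tendsto_atTop.mpr fun L => ?_
  filter_upwards [hmono.tendsto_atTop.eventually (hgaps L)] with n hn
  have hlt := hmono n.lt_succ_self
  have : Nat.nth (· ∈ S) n + L ≤ Nat.nth (· ∈ S) (n + 1) :=
    hn _ ⟨hmem n, Set.mem_Ici.mpr le_rfl⟩ _ ⟨hmem (n + 1), Set.mem_Ici.mpr hlt.le⟩ hlt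
  omega

theorem summable_comp_nth_iff {α : Type*} [AddCommMonoid α] [TopologicalSpace α] {f : ℕ → α}
    (hS : S.Infinite) : Summable (fun n => f (Nat.nth (· ∈ S) n)) ↔ Summable (S.indicator f) := by
  have hcomp : (fun n => f (Nat.nth (· ∈ S) n)) = S.indicator f ∘ Nat.nth (· ∈ S) :=
    funext fun n => (Set.indicator_of_mem (Nat.nth_mem_of_infinite hS n) f).symm
  rw [hcomp]
  refine (Nat.nth_strictMono hS).injective.summable_iff fun x hx => Set.indicator_of_notMem ?_ f
  rwa [Nat.range_nth_of_infinite hS] at hx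

end Enumeration

theorem divergent_subseq_with_growing_gaps (ω : ℕ → ℝ) (hpos : ∀ j, 0 ≤ ω j)
    (hdiv : ¬ Summable ω) :
    ∃ j : ℕ → ℕ, StrictMono j ∧
      Tendsto (fun n => j (n + 1) - j n) atTop atTop ∧
      ¬ Summable (fun n => ω (j n)) := by
  choose F hF_ge hF_gaps hF_sum using fun a (n : ℕ) =>
    exists_finset_gapsAtLeast_lt_sum hpos hdiv a n.succ_pos 1
  set S := ⋃ n, (Blocks.block F n : Set ℕ)
  have hS_div : ¬ Summable (S.indicator ω) :=
    Blocks.not_summable_indicator_iUnion_block hF_ge fun a n => (hF_sum a n).le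
  have hS_inf : S.Infinite := fun hfin =>
    hS_div (summable_of_hasFiniteSupport (hfin.subset (Set.support_indicator_subset)))
  exact ⟨Nat.nth (· ∈ S), Nat.nth_strictMono hS_inf,
    (Blocks.hasGrowingGaps_iUnion_block hF_ge hF_gaps).tendsto_nth_succ_sub_nth hS_inf,
    (summable_comp_nth_iff hS_inf).not.mpr hS_div⟩
end

section
/- Let $f$ have wavelet coefficients $(c^i_{j,k})$ in a 1-smooth wavelet basis, let $H_{\min}(f) = \sup\{\alpha > 0 : f \in C^\alpha(\mathbb{T})\}$, and let $(\chi^i_{j,k})$ be I.I.D. random variables, each almost surely nonzero, with all moments finite and $\mathbb{P}(|\chi| \geq \delta) > 0$ for all sufficiently small $\delta > 0$. Then the randomized function $X_f$ with coefficients $c^i_{j,k}\chi^i_{j,k}$ satisfies $H_{\min}(X_f) = H_{\min}(f)$ almost surely. -/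
open MeasureTheory ProbabilityTheory

/-!
Multiplying the coefficients by the `χ`s moves Hölder exponents by arbitrarily little in either
direction. By the first Borel–Cantelli lemma and the rapid tail decay, almost surely
`|χ_{j,k}| ≤ C_ε 2^{εj}` for every `ε > 0`, so `c ∈ C^α` gives `c χ ∈ C^{α-ε}`. Conversely, if
`|c_{j,k}| 2^{βj}` is unbounded, infinitely many of the coefficients where it is large meet
independent events `|χ| ≥ δ` of fixed positive probability (second Borel–Cantelli), so
`c χ ∉ C^β`. Only countably many `β` (the rationals) are needed to pin down the supremum.
-/

/-- The uniform Hölder exponent of a function on the torus, expressed through the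
wavelet characterization of the Hölder spaces `C^α`: `f ∈ C^α` iff its wavelet
coefficients satisfy `|c j k| ≤ C 2^(-α j)`. -/
noncomputable def Hmin (c : (j : ℕ) → Fin (2 ^ j) → ℝ) : ℝ :=
  sSup {α : ℝ | 0 < α ∧ ∃ C : ℝ, ∀ j k, |c j k| ≤ C * (2 : ℝ) ^ (-(α * j))}

open Filter Set

theorem csSup_eq_csSup_of_forall_exists_gt {α : Type*} [ConditionallyCompleteLinearOrder α]
    [NoMinOrder α] {s t : Set α} (hs : ∀ x ∈ s, ∀ y < x, ∃ z ∈ t, y < z)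
    (ht : ∀ x ∈ t, ∀ y < x, ∃ z ∈ s, y < z) : sSup s = sSup t := by
  have upperBounds_subset : ∀ {s t : Set α}, (∀ x ∈ s, ∀ y < x, ∃ z ∈ t, y < z) →
      upperBounds t ⊆ upperBounds s := fun h u hu x hx => not_lt.1 fun hux =>
    let ⟨_, hz, huz⟩ := h x hx u hux; (hu hz).not_gt huz
  have nonempty : ∀ {s t : Set α}, (∀ x ∈ s, ∀ y < x, ∃ z ∈ t, y < z) →
      s.Nonempty → t.Nonempty := fun h ⟨x, hx⟩ =>
    let ⟨_, hz, _⟩ := h x hx _ (exists_lt x).choose_spec; ⟨_, hz⟩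
  have key : upperBounds s = upperBounds t :=
    (upperBounds_subset ht).antisymm (upperBounds_subset hs)
  by_cases hb : BddAbove s
  · rcases s.eq_empty_or_nonempty with rfl | hsne
    · rw [not_nonempty_iff_eq_empty.1 (mt (nonempty ht) not_nonempty_empty)]
    · exact (((isLUB_congr key).1 (isLUB_csSup hsne hb)).csSup_eq (nonempty hs hsne)).symm
  · have ht : ¬BddAbove t := by rwa [BddAbove, ← key]
    rw [csSup_of_not_bddAbove hb, csSup_of_not_bddAbove ht]

section Coefficients

variable {ι : ℕ → Type*}

def IsHolderCoeff (α : ℝ) (c : (j : ℕ) → ι j → ℝ) : Prop :=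
  ∃ C : ℝ, ∀ j k, |c j k| ≤ C * (2 : ℝ) ^ (-(α * j))

def holderExponents (c : (j : ℕ) → ι j → ℝ) : Set ℝ :=
  {α | 0 < α ∧ IsHolderCoeff α c}

theorem isHolderCoeff_iff_bddAbove {α : ℝ} {c : (j : ℕ) → ι j → ℝ} :
    IsHolderCoeff α c ↔
      BddAbove (range fun p : Σ j, ι j => |c p.1 p.2| * 2 ^ (α * p.1)) := by
  have h : ∀ (C : ℝ) j k, |c j k| ≤ C * (2 : ℝ) ^ (-(α * j)) ↔ |c j k| * 2 ^ (α * j) ≤ C :=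
    fun C j k => by rw [Real.rpow_neg zero_le_two, le_mul_inv_iff₀ (by positivity)]
  simp only [IsHolderCoeff, h, BddAbove, upperBounds, forall_mem_range, Sigma.forall]
  rfl

theorem IsHolderCoeff.mono {α β : ℝ} {c : (j : ℕ) → ι j → ℝ} (hc : IsHolderCoeff α c)
    (hβα : β ≤ α) : IsHolderCoeff β c := by
  obtain ⟨C, hC⟩ := hc
  refine ⟨C, fun j k => (hC j k).trans (mul_le_mul_of_nonneg_left ?_ ?_)⟩
  · exact Real.rpow_le_rpow_of_exponent_le one_le_two (by gcongr)
  · exact nonneg_of_mul_nonneg_left ((abs_nonneg _).trans (hC j k)) (by positivity)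

theorem IsHolderCoeff.mul {α β : ℝ} {c x : (j : ℕ) → ι j → ℝ} (hc : IsHolderCoeff α c)
    (hx : IsHolderCoeff β x) : IsHolderCoeff (α + β) fun j k => c j k * x j k := by
  obtain ⟨C, hC⟩ := hc
  obtain ⟨D, hD⟩ := hx
  refine ⟨C * D, fun j k => ?_⟩
  calc |c j k * x j k| ≤ C * (2 : ℝ) ^ (-(α * j)) * (D * 2 ^ (-(β * j))) := by
        rw [abs_mul]
        exact mul_le_mul (hC j k) (hD j k) (abs_nonneg _) ((abs_nonneg _).trans (hC j k))
    _ = C * D * 2 ^ (-((α + β) * j)) := by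
        rw [mul_mul_mul_comm, ← Real.rpow_add two_pos]
        ring_nf

theorem isHolderCoeff_neg_of_eventually_abs_lt {ε : ℝ} {x : (j : ℕ) → ι j → ℝ}
    (hx : ∀ᶠ p : Σ j, ι j in cofinite, |x p.1 p.2| < 2 ^ (ε * p.1)) :
    IsHolderCoeff (-ε) x := by
  refine isHolderCoeff_iff_bddAbove.2
    (isBoundedUnder_of_eventually_le (a := 1) ?_).bddAbove_range_of_cofinite
  filter_upwards [hx] with p hp
  rw [neg_mul, Real.rpow_neg zero_le_two, ← div_eq_mul_inv]
  exact (div_le_one (by positivity)).2 hp.le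

theorem sSup_holderExponents_mul_eq {c x : (j : ℕ) → ι j → ℝ}
    (hx : ∀ ε > 0, IsHolderCoeff (-ε) x)
    (hc : ∀ β : ℚ, IsHolderCoeff β (fun j k => c j k * x j k) → IsHolderCoeff β c) :
    sSup (holderExponents fun j k => c j k * x j k) = sSup (holderExponents c) := by
  refine csSup_eq_csSup_of_forall_exists_gt (fun γ hγ y hy => ?_) (fun α hα y hy => ?_)
  · obtain ⟨β, hyβ, hβγ⟩ := exists_rat_btwn (max_lt hy hγ.1)
    have hβ : 0 < (β : ℝ) := (le_max_right _ _).trans_lt hyβ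
    exact ⟨β, ⟨hβ, hc β (hγ.2.mono hβγ.le)⟩, (le_max_left _ _).trans_lt hyβ⟩
  · set ε := (α - max y 0) / 2 with hε_def
    have hε : 0 < ε := half_pos (sub_pos.2 (max_lt hy hα.1))
    have hyε : max y 0 < α - ε := by linarith
    exact ⟨α - ε, ⟨(le_max_right _ _).trans_lt hyε, hα.2.mul (hx ε hε)⟩,
      (le_max_left _ _).trans_lt hyε⟩

end Coefficients

section Probability

def HasRapidTailDecay {Ω : Type*} [MeasurableSpace Ω] (X : Ω → ℝ) (μ : Measure Ω) : Prop :=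
  ∀ l : ℝ, 0 < l → ∃ C : ℝ, 0 < C ∧ ∀ x : ℝ, 0 < x →
    μ {ω | x ≤ |X ω|} ≤ ENNReal.ofReal (C / x ^ l)

variable {Ω : Type*} [MeasurableSpace Ω] {μ : Measure Ω}

theorem ae_eventually_abs_lt_two_rpow {χ : (Σ j : ℕ, Fin (2 ^ j)) → Ω → ℝ}
    {p₀ : Σ j : ℕ, Fin (2 ^ j)} (hident : ∀ p, IdentDistrib (χ p) (χ p₀) μ μ)
    (hfast : HasRapidTailDecay (χ p₀) μ) {ε : ℝ} (hε : 0 < ε) :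
    ∀ᵐ ω ∂μ, ∀ᶠ p in cofinite, |χ p ω| < 2 ^ (ε * p.1) := by
  obtain ⟨C, hC, hCtail⟩ := hfast (2 / ε) (by positivity)
  have htail_eq : ∀ p (x : ℝ), μ {ω | x ≤ |χ p ω|} = μ {ω | x ≤ |χ p₀ ω|} := fun p x =>
    (hident p).measure_mem_eq (measurableSet_le measurable_const measurable_abs)
  -- with `l = 2 / ε`, the tail at level `2 ^ (ε j)` is `C 4⁻ʲ`, against `2 ^ j` coefficients
  have hlevel : ∀ j : ℕ, ∑' k : Fin (2 ^ j), μ {ω | 2 ^ (ε * j) ≤ |χ ⟨j, k⟩ ω|} ≤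
      ENNReal.ofReal (C * 2⁻¹ ^ j) := by
    intro j
    have hpow : ((2 : ℝ) ^ (ε * j)) ^ (2 / ε) = 2 ^ j * 2 ^ j := by
      rw [← Real.rpow_mul zero_le_two, ← pow_add, ← Real.rpow_natCast]
      congr 1
      field_simp
      push_cast
      ring
    calc ∑' k : Fin (2 ^ j), μ {ω | 2 ^ (ε * j) ≤ |χ ⟨j, k⟩ ω|}
        = 2 ^ j * μ {ω | 2 ^ (ε * j) ≤ |χ p₀ ω|} := by
          simp [htail_eq]
      _ ≤ 2 ^ j * ENNReal.ofReal (C / (2 ^ j * 2 ^ j)) := by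
          rw [← hpow]
          gcongr
          exact hCtail _ (by positivity)
      _ = ENNReal.ofReal (C * 2⁻¹ ^ j) := by
          rw [← ENNReal.ofReal_ofNat, ← ENNReal.ofReal_pow zero_le_two,
            ← ENNReal.ofReal_mul (by positivity)]
          congr 1
          field_simp
          rw [← mul_pow]
          norm_num
  have hsum : ∑' p : Σ j : ℕ, Fin (2 ^ j), μ {ω | 2 ^ (ε * p.1) ≤ |χ p ω|} ≠ ⊤ := by
    rw [ENNReal.tsum_sigma']
    refine ne_top_of_le_ne_top ?_ (ENNReal.tsum_le_tsum hlevel)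
    rw [← ENNReal.ofReal_tsum_of_nonneg (fun j => by positivity)
      ((summable_geometric_of_lt_one (by norm_num) (by norm_num)).mul_left C)]
    exact ENNReal.ofReal_ne_top
  filter_upwards [ae_finite_setOfPred_mem hsum] with ω hω
  simpa only [eventually_cofinite, not_lt] using hω

theorem ae_isHolderCoeff_neg {χ : (Σ j : ℕ, Fin (2 ^ j)) → Ω → ℝ}
    {p₀ : Σ j : ℕ, Fin (2 ^ j)} (hident : ∀ p, IdentDistrib (χ p) (χ p₀) μ μ)
    (hfast : HasRapidTailDecay (χ p₀) μ) :
    ∀ᵐ ω ∂μ, ∀ ε > 0, IsHolderCoeff (-ε) fun j k => χ ⟨j, k⟩ ω := by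
  filter_upwards [ae_all_iff.2 fun n : ℕ =>
      ae_eventually_abs_lt_two_rpow hident hfast (Nat.one_div_pos_of_nat (n := n))]
    with ω hω ε hε
  obtain ⟨n, hn⟩ := exists_nat_one_div_lt hε
  exact (isHolderCoeff_neg_of_eventually_abs_lt (hω n)).mono (neg_le_neg hn.le)

section Independent

variable {ι : Type*} {χ : ι → Ω → ℝ} {p₀ : ι} {δ : ℝ}

theorem ae_exists_mem_le_abs (hmeas : ∀ p, Measurable (χ p)) (hind : iIndepFun χ μ)
    (hident : ∀ p, IdentDistrib (χ p) (χ p₀) μ μ) (hq : μ {ω | δ ≤ |χ p₀ ω|} ≠ 0)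
    {s : Set ι} (hs : s.Infinite) :
    ∀ᵐ ω ∂μ, ∃ p ∈ s, δ ≤ |χ p ω| := by
  have : IsProbabilityMeasure μ := hind.isProbabilityMeasure
  let e : ℕ → ι := fun n => hs.natEmbedding s n
  have he : e.Injective := Subtype.val_injective.comp (hs.natEmbedding s).injective
  let T : Set ℝ := {y | δ ≤ |y|}
  have hT : MeasurableSet T := measurableSet_le measurable_const measurable_abs
  let E : ℕ → Set Ω := fun n => χ (e n) ⁻¹' T
  have hEmeas : ∀ n, MeasurableSet (E n) := fun n => hmeas _ hT
  have hEind : iIndepSet E μ := iIndep_comap_mem_iff.1 <|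
    (hind.precomp he).comp (fun _ y => y ∈ T) fun _ => measurable_mem.2 hT
  have hEsum : ∑' n, μ (E n) = ⊤ := by
    simp only [E, (hident _).measure_mem_eq hT]
    exact ENNReal.tsum_const_eq_top_of_ne_zero hq
  have hlimsup : ∀ᵐ ω ∂μ, ω ∈ limsup E atTop := ae_iff.2 <|
    (prob_compl_eq_zero_iff (.measurableSet_limsup hEmeas)).2
      (measure_limsup_eq_one hEmeas hEind hEsum)
  filter_upwards [hlimsup] with ω hω
  obtain ⟨n, -, hn⟩ := (frequently_atTop.1 (mem_limsup_iff_frequently_mem.1 hω)) 0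
  exact ⟨e n, (hs.natEmbedding s n).2, hn⟩

theorem ae_not_bddAbove_mul_abs (hmeas : ∀ p, Measurable (χ p)) (hind : iIndepFun χ μ)
    (hident : ∀ p, IdentDistrib (χ p) (χ p₀) μ μ) (hδ : 0 < δ) (hq : μ {ω | δ ≤ |χ p₀ ω|} ≠ 0)
    {a : ι → ℝ} (ha : ¬BddAbove (range a)) :
    ∀ᵐ ω ∂μ, ¬BddAbove (range fun p => a p * |χ p ω|) := by
  have hinf : ∀ n : ℕ, {p | n < a p}.Infinite := by
    intro n hfin
    obtain ⟨M, hM⟩ := (hfin.image a).bddAbove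
    refine ha ⟨max M n, forall_mem_range.2 fun p => ?_⟩
    by_cases hp : (n : ℝ) < a p
    · exact (hM (mem_image_of_mem a hp)).trans (le_max_left _ _)
    · exact (not_lt.1 hp).trans (le_max_right _ _)
  filter_upwards [ae_all_iff.2 fun n => ae_exists_mem_le_abs hmeas hind hident hq (hinf n)]
    with ω hω ⟨b, hb⟩
  obtain ⟨n, hn⟩ := exists_nat_gt (b / δ)
  obtain ⟨p, hnp, hχ⟩ := hω n
  have hap : 0 ≤ a p := n.cast_nonneg.trans hnp.le
  have : b < a p * |χ p ω| := calc
    b < n * δ := (div_lt_iff₀ hδ).1 hn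
    _ ≤ a p * δ := by gcongr
    _ ≤ a p * |χ p ω| := by gcongr
  exact (hb ⟨p, rfl⟩).not_gt this

end Independent

variable {ι : ℕ → Type*} {χ : (Σ j, ι j) → Ω → ℝ} {p₀ : Σ j, ι j} {δ : ℝ}

theorem ae_not_isHolderCoeff_mul (hmeas : ∀ p, Measurable (χ p)) (hind : iIndepFun χ μ)
    (hident : ∀ p, IdentDistrib (χ p) (χ p₀) μ μ) (hδ : 0 < δ) (hq : μ {ω | δ ≤ |χ p₀ ω|} ≠ 0)
    {β : ℝ} {c : (j : ℕ) → ι j → ℝ} (hc : ¬IsHolderCoeff β c) :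
    ∀ᵐ ω ∂μ, ¬IsHolderCoeff β fun j k => c j k * χ ⟨j, k⟩ ω := by
  rw [isHolderCoeff_iff_bddAbove] at hc
  filter_upwards [ae_not_bddAbove_mul_abs hmeas hind hident hδ hq hc] with ω hω
  rw [isHolderCoeff_iff_bddAbove]
  convert hω using 3
  funext p
  rw [abs_mul, mul_right_comm]

end Probability

theorem uniform_holder_exponent_invariant_general
    {Ω : Type*} [MeasurableSpace Ω] (μ : Measure Ω)
    (c : (j : ℕ) → Fin (2 ^ j) → ℝ)
    (χ : (Σ j : ℕ, Fin (2 ^ j)) → Ω → ℝ)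
    (hmeas : ∀ p, Measurable (χ p))
    (hind : iIndepFun χ μ)
    (hident : ∀ p, IdentDistrib (χ p) (χ ⟨0, 0⟩) μ μ)
    (hfast : ∀ l : ℝ, 0 < l → ∃ C : ℝ, 0 < C ∧ ∀ x : ℝ, 0 < x →
      μ {ω | x ≤ |χ ⟨0, 0⟩ ω|} ≤ ENNReal.ofReal (C / x ^ l))
    (hpos : ∃ δ₀ : ℝ, 0 < δ₀ ∧ ∀ δ : ℝ, 0 < δ → δ < δ₀ → 0 < μ {ω | δ ≤ |χ ⟨0, 0⟩ ω|}) :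
    ∀ᵐ ω ∂μ, Hmin (fun j k => c j k * χ ⟨j, k⟩ ω) = Hmin c := by
  obtain ⟨δ₀, hδ₀, hpos⟩ := hpos
  have hq : μ {ω | δ₀ / 2 ≤ |χ ⟨0, 0⟩ ω|} ≠ 0 := (hpos _ (half_pos hδ₀) (half_lt_self hδ₀)).ne'
  have hc : ∀ᵐ ω ∂μ, ∀ β : ℚ,
      IsHolderCoeff β (fun j k => c j k * χ ⟨j, k⟩ ω) → IsHolderCoeff β c := by
    refine ae_all_iff.2 fun β => ?_
    by_cases hβ : IsHolderCoeff (β : ℝ) c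
    · exact ae_of_all _ fun _ _ => hβ
    · filter_upwards [ae_not_isHolderCoeff_mul hmeas hind hident (half_pos hδ₀) hq hβ]
        with ω hω h using absurd h hω
  filter_upwards [ae_isHolderCoeff_neg hident hfast, hc] with ω hx hcω
  exact sSup_holderExponents_mul_eq hx hcω

theorem uniform_holder_exponent_invariant
    {Ω : Type*} [MeasurableSpace Ω] (μ : Measure Ω) [IsProbabilityMeasure μ]
    (c : (j : ℕ) → Fin (2 ^ j) → ℝ)
    (χ : (Σ j : ℕ, Fin (2 ^ j)) → Ω → ℝ)
    (hmeas : ∀ p, Measurable (χ p))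
    (hind : iIndepFun χ μ)
    (hident : ∀ p, IdentDistrib (χ p) (χ ⟨0, 0⟩) μ μ)
    (hnonzero : ∀ p, μ {ω | χ p ω = 0} = 0)
    (hfast : ∀ l : ℝ, 0 < l → ∃ C : ℝ, 0 < C ∧ ∀ x : ℝ, 0 < x →
      μ {ω | x ≤ |χ ⟨0, 0⟩ ω|} ≤ ENNReal.ofReal (C / x ^ l))
    (hpos : ∃ δ₀ : ℝ, 0 < δ₀ ∧ ∀ δ : ℝ, 0 < δ → δ < δ₀ → 0 < μ {ω | δ ≤ |χ ⟨0, 0⟩ ω|}) :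
    ∀ᵐ ω ∂μ, Hmin (fun j k => c j k * χ ⟨j, k⟩ ω) = Hmin c :=
  uniform_holder_exponent_invariant_general μ c χ hmeas hind hident hfast hpos
end
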